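/- Fix an index i belonging to the set of true null hypotheses. Suppose that (a) the CDF of the test statistic T_i satisfies F_i(t) ≤ F_j(t) for every negative control index j and all real t, and (b) the collection of probability-integral transforms (F_j(T_j)) indexed by {i} together with all negative control indices is exchangeable. Assume all test statistics have continuous CDFs so there are no ties almost surely. Then the RANC p-value p_i is valid: P(p_i ≤ α) ≤ α for all 0 < α < 1. -/

import Mathlib

open MeasureTheory ProbabilityTheory

/-- The (right-continuous) CDF of a real random variable `X` under `μ`. -/
noncomputable def cdf' {Ω : Type*} [MeasurableSpace Ω] (μ : Measure Ω) (X : Ω → ℝ) (t : ℝ) : ℝ :=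
  (μ {ω | X ω ≤ t}).toReal

/-- The random variable `X` has a continuous CDF under `μ`. -/
def ContinuousCDF {Ω : Type*} [MeasurableSpace Ω] (μ : Measure Ω) (X : Ω → ℝ) : Prop :=
  Continuous (cdf' μ X)

/-- A collection of real random variables is exchangeable: its joint law is invariant
under every permutation of the index set. -/
def Exchangeable {Ω : Type*} [MeasurableSpace Ω] {ι : Type*} (μ : Measure Ω)
    (X : ι → Ω → ℝ) : Prop :=
  ∀ e : Equiv.Perm ι,
    Measure.map (fun ω => fun i => X (e i) ω) μ = Measure.map (fun ω => fun i => X i ω) μ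

/-- The RANC p-value of investigated hypothesis `i` (statistics `T (Fin.castAdd m i)`,
negative controls `T (Fin.natAdd n j)`):
`p_i = (1 + #{negative controls j : T_j ≤ T_i}) / (1 + m)`. -/
noncomputable def ranc {Ω : Type*} (n m : ℕ) (T : Fin (n + m) → Ω → ℝ) (i : Fin n)
    (ω : Ω) : ℝ :=
  ((1 : ℝ) +
      ({j : Fin m | T (Fin.natAdd n j) ω ≤ T (Fin.castAdd m i) ω} : Set (Fin m)).ncard) /
    (1 + (m : ℝ))

/-!
Write `U_k = F_k(T_k)` for `k = i` and for the negative controls, `N = m + 1` variables in all.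
By exchangeability the `N` events "at most `x` of the `U`'s are `≤ U_k`" have the same
probability, and at most `x` of them occur simultaneously, so each has probability at most
`x / N`. Almost surely `T_j` does not lie at the right end of a flat stretch of `F_j`, so
`F_j(T_j) ≤ F_i(T_i) ≤ F_j(T_i)` forces `T_j ≤ T_i`. Hence the RANC count dominates the rank
of `U_i`, and `p_i ≤ α` forces that rank to be at most `α N`.
-/

open Finset

lemma IsClosed.exists_seq_mem_forall_le {S : Set ℝ} (hS : IsClosed S) (hne : S.Nonempty) :
    ∃ t : ℕ → ℝ, (∀ n, t n ∈ S) ∧ ∀ x ∈ S, ∃ n, x ≤ t n := by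
  by_cases hbdd : BddAbove S
  · exact ⟨fun _ => sSup S, fun _ => hS.csSup_mem hne hbdd, fun x hx => ⟨0, le_csSup hbdd hx⟩⟩
  · choose t htS hlt using not_bddAbove_iff.1 hbdd
    refine ⟨fun n => t n, fun n => htS n, fun x _ => ?_⟩
    obtain ⟨n, hn⟩ := exists_nat_ge x
    exact ⟨n, hn.trans (hlt n).le⟩

section CDF

variable {Ω : Type*} [MeasurableSpace Ω] {μ : Measure Ω} [IsFiniteMeasure μ] {X : Ω → ℝ}

lemma cdf'_mono (X : Ω → ℝ) : Monotone (cdf' μ X) :=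
  fun _ _ hst => ENNReal.toReal_mono (measure_ne_top μ _) (measure_mono fun _ hω => le_trans hω hst)

lemma measure_preimage_Ioc_eq_zero (hX : Measurable X) {q t : ℝ}
    (h : cdf' μ X t ≤ cdf' μ X q) : μ (X ⁻¹' Set.Ioc q t) = 0 := by
  rcases le_or_gt t q with htq | hqt
  · simp [Set.Ioc_eq_empty_of_le htq]
  have hsub : {ω | X ω ≤ q} ⊆ {ω | X ω ≤ t} := fun _ hω => le_trans hω hqt.le
  have hle : μ {ω | X ω ≤ t} ≤ μ {ω | X ω ≤ q} :=
    (ENNReal.toReal_le_toReal (measure_ne_top μ _) (measure_ne_top μ _)).1 h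
  have hIoc : X ⁻¹' Set.Ioc q t = {ω | X ω ≤ t} \ {ω | X ω ≤ q} := by
    ext ω; simp [and_comm]
  rw [hIoc, measure_sdiff hsub (hX measurableSet_Iic).nullMeasurableSet (measure_ne_top μ _)]
  exact tsub_eq_zero_of_le hle

lemma measure_lt_and_cdf'_le_eq_zero (hX : Measurable X) (hc : ContinuousCDF μ X) (q : ℝ) :
    μ {ω | q < X ω ∧ cdf' μ X (X ω) ≤ cdf' μ X q} = 0 := by
  obtain ⟨t, htS, hcofinal⟩ := (isClosed_le hc continuous_const).exists_seq_mem_forall_le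
    ⟨q, le_refl (cdf' μ X q)⟩
  refine measure_mono_null (fun ω ⟨hq, hF⟩ => ?_) (measure_iUnion_null fun n =>
    measure_preimage_Ioc_eq_zero hX (htS n))
  obtain ⟨n, hn⟩ := hcofinal (X ω) hF
  exact Set.mem_iUnion.2 ⟨n, hq, hn⟩

lemma ae_cdf'_lt_cdf'_of_lt (hX : Measurable X) (hc : ContinuousCDF μ X) :
    ∀ᵐ ω ∂μ, ∀ t, t < X ω → cdf' μ X t < cdf' μ X (X ω) := by
  have hrat : ∀ᵐ ω ∂μ, ∀ q : ℚ, (q : ℝ) < X ω → cdf' μ X q < cdf' μ X (X ω) :=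
    ae_all_iff.2 fun q => measure_mono_null (fun ω hω => by simpa using hω)
      (measure_lt_and_cdf'_le_eq_zero hX hc q)
  filter_upwards [hrat] with ω hω t ht
  obtain ⟨q, htq, hqX⟩ := exists_rat_btwn ht
  exact (cdf'_mono X htq.le).trans_lt (hω q hqX)

end CDF

section Rank

variable {ι : Type*} [Fintype ι]

noncomputable def rankCount (v : ι → ℝ) (k : ι) : ℕ := #{l | v l ≤ v k}

lemma rankCount_comp_perm (v : ι → ℝ) (e : Equiv.Perm ι) (k : ι) :
    rankCount (v ∘ e) k = rankCount v (e k) := by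
  simp only [rankCount, card_filter, Function.comp_apply]
  exact Equiv.sum_comp e (fun l => if v l ≤ v (e k) then 1 else 0)

lemma rankCount_option_none {β : Type*} [Fintype β] (v : Option β → ℝ) :
    rankCount v none = 1 + #{j | v (some j) ≤ v none} := by
  rw [rankCount, card_filter, Fintype.sum_option, if_pos le_rfl, card_filter]

lemma measurable_rankCount (k : ι) : Measurable fun v : ι → ℝ => rankCount v k := by
  simp only [rankCount, card_filter]
  exact Finset.measurable_sum _ fun l _ => Measurable.ite
    (measurableSet_le (measurable_pi_apply l) (measurable_pi_apply k)) measurable_const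
    measurable_const

lemma card_rankCount_le_le (v : ι → ℝ) {x : ℝ} (hx : 0 ≤ x) :
    (#{k | (rankCount v k : ℝ) ≤ x} : ℝ) ≤ x := by
  set S := ({k | (rankCount v k : ℝ) ≤ x} : Finset ι)
  rcases S.eq_empty_or_nonempty with hS | hS
  · simpa [hS] using hx
  obtain ⟨k, hkS, hmax⟩ := S.exists_max_image v hS
  calc (#S : ℝ) ≤ rankCount v k := by
        exact_mod_cast card_le_card fun l hl => mem_filter.2 ⟨mem_univ l, hmax l hl⟩
    _ ≤ x := (mem_filter.1 hkS).2

end Rank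

open scoped Classical in
lemma sum_measure_le_of_card_mem_le {Ω ι : Type*} [MeasurableSpace Ω] [Fintype ι]
    (μ : Measure Ω) {B : ι → Set Ω} (hB : ∀ k, MeasurableSet (B k)) {c : ENNReal}
    (hc : ∀ ω, (#{k | ω ∈ B k} : ENNReal) ≤ c) :
    ∑ k, μ (B k) ≤ c * μ Set.univ := by
  calc ∑ k, μ (B k) = ∑ k, ∫⁻ ω, (B k).indicator 1 ω ∂μ := by
        simp only [lintegral_indicator_one (hB _)]
    _ = ∫⁻ ω, ∑ k, (B k).indicator 1 ω ∂μ :=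
        (lintegral_finsetSum _ fun k _ => measurable_one.indicator (hB k)).symm
    _ = ∫⁻ ω, (#{k | ω ∈ B k} : ENNReal) ∂μ := by
        congr with ω
        simp only [Set.indicator_apply, Pi.one_apply, Finset.sum_boole]
    _ ≤ ∫⁻ _, c ∂μ := lintegral_mono hc
    _ = c * μ Set.univ := lintegral_const c

section Exchangeable

variable {Ω ι : Type*} [MeasurableSpace Ω] {μ : Measure Ω} {U : ι → Ω → ℝ}

lemma Exchangeable.measure_preimage_perm (h : Exchangeable μ U) (hU : ∀ k, Measurable (U k))
    (e : Equiv.Perm ι) {A : Set (ι → ℝ)} (hA : MeasurableSet A) :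
    μ {ω | (fun l => U (e l) ω) ∈ A} = μ {ω | (fun l => U l ω) ∈ A} := by
  have := congrArg (· A) (h e)
  rwa [Measure.map_apply (measurable_pi_lambda _ fun l => hU (e l)) hA,
    Measure.map_apply (measurable_pi_lambda _ fun l => hU l) hA] at this

lemma Exchangeable.measure_rankCount_le [Fintype ι] [IsProbabilityMeasure μ]
    (h : Exchangeable μ U) (hU : ∀ k, Measurable (U k)) (k₀ : ι) {x : ℝ} (hx : 0 ≤ x) :
    μ {ω | (rankCount (fun l => U l ω) k₀ : ℝ) ≤ x} ≤ ENNReal.ofReal (x / Fintype.card ι) := by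
  classical
  set B : ι → Set Ω := fun k => {ω | (rankCount (fun l => U l ω) k : ℝ) ≤ x}
  have hA : ∀ k, MeasurableSet {v : ι → ℝ | (rankCount v k : ℝ) ≤ x} :=
    fun k => measurableSet_le (measurable_from_nat.comp (measurable_rankCount k)) measurable_const
  have hsame : ∀ k, μ (B k) = μ (B k₀) := fun k => by
    refine Eq.trans ?_ (h.measure_preimage_perm hU (Equiv.swap k₀ k) (hA k₀))
    congr with ω
    change _ ≤ x ↔ (rankCount ((fun l => U l ω) ∘ Equiv.swap k₀ k) k₀ : ℝ) ≤ x
    rw [rankCount_comp_perm, Equiv.swap_apply_left]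
  have hsum : ∑ k, μ (B k) ≤ ENNReal.ofReal x := by
    simpa using sum_measure_le_of_card_mem_le μ
      (fun k => measurable_pi_lambda _ (fun l => hU l) (hA k)) fun ω => by
        rw [← ENNReal.ofReal_natCast]
        exact ENNReal.ofReal_le_ofReal (card_rankCount_le_le (fun l => U l ω) hx)
  have hN : (0 : ℝ) < Fintype.card ι := by exact_mod_cast Fintype.card_pos_iff.2 ⟨k₀⟩
  rw [ENNReal.ofReal_div_of_pos hN, ENNReal.ofReal_natCast,
    ENNReal.le_div_iff_mul_le (Or.inl (by exact_mod_cast hN.ne')) (Or.inl (by simp)), mul_comm]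
  simpa [hsame, Finset.sum_const, nsmul_eq_mul] using hsum

end Exchangeable

lemma ranc_eq {Ω : Type*} (n m : ℕ) (T : Fin (n + m) → Ω → ℝ) (i : Fin n) (ω : Ω) :
    ranc n m T i ω =
      (1 + #{j | T (Fin.natAdd n j) ω ≤ T (Fin.castAdd m i) ω}) / (1 + (m : ℝ)) := by
  rw [ranc, ← Set.ncard_coe_finset]
  simp

theorem stmt0 {Ω : Type*} [MeasurableSpace Ω] (μ : Measure Ω) [IsProbabilityMeasure μ]
    (n m : ℕ) (T : Fin (n + m) → Ω → ℝ) (hmeas : ∀ k, Measurable (T k))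
    (hcont : ∀ k, ContinuousCDF μ (T k))
    (i : Fin n)
    (hdom : ∀ j : Fin m, ∀ t : ℝ,
      cdf' μ (T (Fin.castAdd m i)) t ≤ cdf' μ (T (Fin.natAdd n j)) t)
    (hexch : Exchangeable μ (fun k : Option (Fin m) => fun ω =>
      match k with
      | none => cdf' μ (T (Fin.castAdd m i)) (T (Fin.castAdd m i) ω)
      | some j => cdf' μ (T (Fin.natAdd n j)) (T (Fin.natAdd n j) ω))) :
    ∀ α : ℝ, 0 < α → α < 1 →
      μ {ω | ranc n m T i ω ≤ α} ≤ ENNReal.ofReal α := by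
  intro α hα _
  set U : Option (Fin m) → Ω → ℝ := fun k ω => match k with
      | none => cdf' μ (T (Fin.castAdd m i)) (T (Fin.castAdd m i) ω)
      | some j => cdf' μ (T (Fin.natAdd n j)) (T (Fin.natAdd n j) ω)
  have hUmeas : ∀ k, Measurable (U k) := by
    rintro (_ | j) <;> exact (hcont _).measurable.comp (hmeas _)
  have hm : (0 : ℝ) < 1 + m := by positivity
  have hae : ∀ᵐ ω ∂μ, ranc n m T i ω ≤ α →
      (rankCount (fun l => U l ω) none : ℝ) ≤ α * (1 + m) := by
    filter_upwards [ae_all_iff.2 fun j : Fin m =>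
      ae_cdf'_lt_cdf'_of_lt (hmeas (Fin.natAdd n j)) (hcont _)] with ω hflat hranc
    rw [ranc_eq, div_le_iff₀ hm] at hranc
    refine le_trans ?_ hranc
    have hcount : #{j | U (some j) ω ≤ U none ω} ≤
        #{j | T (Fin.natAdd n j) ω ≤ T (Fin.castAdd m i) ω} :=
      card_le_card <| monotone_filter_right _ fun j _ hj => not_lt.1 fun hlt =>
        (((hdom j _).trans_lt (hflat j _ hlt)).trans_le hj).false
    rw [rankCount_option_none]
    push_cast
    gcongr
  calc μ {ω | ranc n m T i ω ≤ α} ≤ μ {ω | (rankCount _ none : ℝ) ≤ α * (1 + m)} :=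
        measure_mono_ae hae
    _ ≤ ENNReal.ofReal (α * (1 + m) / Fintype.card (Option (Fin m))) :=
        hexch.measure_rankCount_le hUmeas none (by positivity)
    _ = ENNReal.ofReal α := by
        rw [Fintype.card_option, Fintype.card_fin, Nat.cast_succ, add_comm (m : ℝ),
          mul_div_cancel_right₀ _ hm.ne']
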